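/- arXiv:2006.07571 — 2 statements merged into one kernel-verified Lean document; each statement's English description precedes it below -/
import Mathlib

section
/- Let p be a probability density supported on M ⊆ ℝ^d that is uniformly Lebesgue approximable on M, and fix k ∈ ℤ⁺ and u ∈ ℝ. Let X_2,…,X_n be i.i.d. with density p, and for x ∈ M let F_{n,k,x}(u) := P(log((n−1)·ρ_k(1)^d) < u), where ρ_k(1) is the k-NN distance of x among {X_2,…,X_n}. Then for almost all x ∈ M, F_{n,k,x}(u) → F_{k,x}(u) := 1 − exp(−λ(x) e^u) · Σ_{j=0}^{k−1} (λ(x) e^u)^j / j! as n → ∞, where λ(x) := c̄ p(x) and c̄ is the Lebesgue volume of the d-dimensional unit ball. That is, F_{n,k,x} converges weakly to the log-Erlang distribution function F_{k,x}. -/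
open MeasureTheory Filter Topology

noncomputable section

abbrev Pt (d : ℕ) := EuclideanSpace ℝ (Fin d)

/-- k-th smallest distance (1-indexed) from `z` to the points of `P`:
the k-NN distance of `z` among `P`. -/
def kNNdist {d : ℕ} (k : ℕ) (P : List (Pt d)) (z : Pt d) : ℝ :=
  (List.insertionSort (· ≤ ·) (P.map (dist z))).getD (k - 1) 0

/-- `ρ_k(i)`: k-NN distance of `X i` among the other points of `X`. -/
def rho {d n : ℕ} (k : ℕ) (X : Fin n → Pt d) (i : Fin n) : ℝ :=
  kNNdist k ((List.ofFn X).eraseIdx (i : ℕ)) (X i)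

/-- `ν_k(i)`: k-NN distance of `X i` among the points of `Y`. -/
def nu {d n m : ℕ} (k : ℕ) (X : Fin n → Pt d) (Y : Fin m → Pt d) (i : Fin n) : ℝ :=
  kNNdist k (List.ofFn Y) (X i)

/-- The k-NN based γ-divergence estimator `D̂_γ(Xⁿ‖Yᵐ)`. -/
def gammaEst (γ : ℝ) (k : ℕ) {d n m : ℕ} (X : Fin n → Pt d) (Y : Fin m → Pt d) : ℝ :=
  (1 / (γ * (1 + γ))) * Real.log (
    (((n : ℝ)⁻¹ * ∑ i, (((n : ℝ) - 1) * rho k X i ^ d) ^ (-γ)) *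
      ((m : ℝ)⁻¹ * ∑ j, (((m : ℝ) - 1) * rho k Y j ^ d) ^ (-γ)) ^ γ) /
    ((n : ℝ)⁻¹ * ∑ i, ((m : ℝ) * nu k X Y i ^ d) ^ (-γ)) ^ (1 + γ))

/-- A function `g ∈ L¹(M)` is uniformly Lebesgue approximable on `M`: for every
sequence `Rₙ → 0` and every `δ > 0` there is `n₀` such that for all `n > n₀` and
almost all `x ∈ M`, the ball-average of `g` on `B(x,Rₙ) ∩ M` is within `δ` of `g x`. -/
def UnifLebApprox {d : ℕ} (M : Set (Pt d)) (g : Pt d → ℝ) : Prop :=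
  IntegrableOn g M ∧
  ∀ R : ℕ → ℝ, Tendsto R atTop (𝓝 0) → ∀ δ > 0, ∃ n₀ : ℕ, ∀ n > n₀,
    ∀ᵐ x ∂(volume.restrict M),
      g x - δ < (∫ t in Metric.closedBall x (R n) ∩ M, g t) /
          (volume (Metric.closedBall x (R n) ∩ M)).toReal ∧
        (∫ t in Metric.closedBall x (R n) ∩ M, g t) /
          (volume (Metric.closedBall x (R n) ∩ M)).toReal < g x + δ

/-- `c̄`: the Lebesgue volume of the `d`-dimensional unit ball. -/
def unitBallVol (d : ℕ) : ℝ := (volume (Metric.ball (0 : Pt d) 1)).toReal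

/-- The digamma function `ψ = Γ'/Γ`. -/
def digamma (z : ℝ) : ℝ := deriv Real.Gamma z / Real.Gamma z

/-- The bound function
`H(x,p,δ,ω) = Σ_{j<k} (1/j!)^ω Γ(κ+jω) ((p(x)+δ)/(p(x)-δ))^{jω} (p(x)-δ)^{-γ} ((1-δ)ω)^{-κ-jω}`. -/
def Hfun {d : ℕ} (k : ℕ) (κ γ : ℝ) (p : Pt d → ℝ) (x : Pt d) (δ ω : ℝ) : ℝ :=
  ∑ j ∈ Finset.range k,
    ((Nat.factorial j : ℝ)⁻¹) ^ ω * Real.Gamma (κ + j * ω) *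
      ((p x + δ) / (p x - δ)) ^ ((j : ℝ) * ω) * (p x - δ) ^ (-γ) *
      ((1 - δ) * ω) ^ (-κ - j * ω)

/-! For `m` sample points, the k-NN distance of `x` is below `r` exactly when at least `k` of the
points fall in the open ball `B(x, r)`, so its law is a binomial tail with success probability
`q = P(B(x, r))`. Since the sample a.s. avoids `x`, `ρ_k > 0` and the event `log(m ρ_k^d) < u` is
`ρ_k < r` for `r = (e^u / m)^(1/d)`. For a.e. `x`, small balls around `x` lie in `M`, so `q` is the
ball average of `p` times `c̄ r^d = c̄ e^u / m`; uniform Lebesgue approximability makes the ball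
averages converge, whence `m q → c̄ p(x) e^u`, and the Poisson limit theorem gives the log-Erlang
distribution function. -/

theorem List.Pairwise.getD_lt_iff_lt_countP {α : Type*} [LinearOrder α] {s : List α}
    (hs : s.Pairwise (· ≤ ·)) {k : ℕ} (hk : k < s.length) (a₀ r : α) :
    s.getD k a₀ < r ↔ k < s.countP (· < r) := by
  induction s generalizing k with
  | nil => simp at hk
  | cons a t ih =>
    rw [List.pairwise_cons] at hs
    by_cases har : a < r
    · cases k with
      | zero => simp [har]
      | succ k =>
        simp only [List.getD_cons_succ, List.countP_cons, har, decide_true, if_true,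
          Nat.add_lt_add_iff_right]
        exact ih hs.2 (by simpa using hk)
    · have hge : ∀ b ∈ a :: t, r ≤ b := by
        simp only [List.mem_cons, forall_eq_or_imp]
        exact ⟨not_lt.1 har, fun b hb => (not_lt.1 har).trans (hs.1 b hb)⟩
      rw [List.countP_eq_zero.2 fun b hb => by simpa using hge b hb,
        List.getD_eq_getElem _ _ hk]
      simpa using hge _ (List.getElem_mem hk)

theorem List.countP_ofFn {α : Type*} {m : ℕ} (g : Fin m → α) (q : α → Bool) :
    (List.ofFn g).countP q = (Finset.univ.filter fun i => q (g i)).card := by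
  induction m with
  | zero => simp
  | succ m ih =>
    rw [List.ofFn_succ, List.countP_cons, ih, Finset.card_filter, Finset.card_filter,
      Fin.sum_univ_succ, add_comm]

theorem kNNdist_lt_iff {d m : ℕ} {k : ℕ} (hk : 0 < k) (hkm : k ≤ m) (ω : Fin m → Pt d)
    (z : Pt d) (r : ℝ) :
    kNNdist k (List.ofFn ω) z < r ↔ k ≤ (Finset.univ.filter fun i => dist z (ω i) < r).card := by
  have hperm := List.perm_insertionSort (· ≤ ·) ((List.ofFn ω).map (dist z))
  have hlt : k - 1 < (List.insertionSort (· ≤ ·) ((List.ofFn ω).map (dist z))).length := by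
    simp only [List.map_ofFn, List.length_insertionSort, List.length_ofFn]; omega
  rw [kNNdist, (List.pairwise_insertionSort _ _).getD_lt_iff_lt_countP hlt,
    hperm.countP_eq, List.map_ofFn, List.countP_ofFn]
  simp only [Function.comp_apply, decide_eq_true_eq]
  omega

theorem exists_kNNdist_eq_dist {d m : ℕ} {k : ℕ} (hk : 0 < k) (hkm : k ≤ m) (ω : Fin m → Pt d)
    (z : Pt d) : ∃ i, kNNdist k (List.ofFn ω) z = dist z (ω i) := by
  have hperm := List.perm_insertionSort (· ≤ ·) ((List.ofFn ω).map (dist z))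
  have hlt : k - 1 < (List.insertionSort (· ≤ ·) ((List.ofFn ω).map (dist z))).length := by
    simp only [List.map_ofFn, List.length_insertionSort, List.length_ofFn]; omega
  obtain ⟨_, hmem, hi⟩ := List.mem_map.1 (hperm.mem_iff.1 (List.getElem_mem hlt))
  obtain ⟨i, rfl⟩ := List.mem_ofFn.1 hmem
  exact ⟨i, by rw [kNNdist, List.getD_eq_getElem _ _ hlt, hi]⟩

section Binomial

variable {α : Type*} {m : ℕ} {B : Set α} [DecidablePred (· ∈ B)]

theorem setOf_filter_mem_eq_pi (s : Finset (Fin m)) :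
    {ω : Fin m → α | Finset.univ.filter (fun i => ω i ∈ B) = s} =
      Set.univ.pi fun i => if i ∈ s then B else Bᶜ := by
  ext ω
  simp only [Set.mem_ofPred_eq, Finset.ext_iff, Finset.mem_filter, Finset.mem_univ, true_and,
    Set.mem_univ_pi]
  refine forall_congr' fun i => ?_
  by_cases hi : i ∈ s <;> simp [hi]

variable [MeasurableSpace α] (μ : Measure α)

theorem measurableSet_setOf_filter_mem_eq (hB : MeasurableSet B) (s : Finset (Fin m)) :
    MeasurableSet {ω : Fin m → α | Finset.univ.filter (fun i => ω i ∈ B) = s} := by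
  rw [setOf_filter_mem_eq_pi]
  exact .univ_pi fun i => by split_ifs; exacts [hB, hB.compl]

theorem pi_setOf_filter_mem_eq [SigmaFinite μ] (s : Finset (Fin m)) :
    Measure.pi (fun _ => μ) {ω : Fin m → α | Finset.univ.filter (fun i => ω i ∈ B) = s} =
      μ B ^ s.card * μ Bᶜ ^ (m - s.card) := by
  rw [setOf_filter_mem_eq_pi, Measure.pi_pi]
  simp_rw [apply_ite μ]
  rw [Finset.prod_ite, Finset.prod_const, Finset.prod_const, Finset.filter_mem_eq_inter,
    Finset.univ_inter, Finset.filter_not, Finset.filter_mem_eq_inter, Finset.univ_inter,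
    ← Finset.compl_eq_univ_sdiff, Finset.card_compl, Fintype.card_fin]

theorem pi_setOf_card_filter_mem_eq [SigmaFinite μ] (hB : MeasurableSet B) (j : ℕ) :
    Measure.pi (fun _ => μ) {ω : Fin m → α | (Finset.univ.filter fun i => ω i ∈ B).card = j} =
      m.choose j * μ B ^ j * μ Bᶜ ^ (m - j) := by
  have hfib : {ω : Fin m → α | (Finset.univ.filter fun i => ω i ∈ B).card = j} =
      (fun ω => Finset.univ.filter fun i => ω i ∈ B) ⁻¹'
        ↑(Finset.powersetCard j (Finset.univ : Finset (Fin m))) := by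
    ext ω; simp
  rw [hfib, ← sum_measure_preimage_singleton _ fun s _ => measurableSet_setOf_filter_mem_eq hB s,
    Finset.sum_congr rfl fun s hs => by
      simp only [Set.preimage, Set.mem_singleton_iff]
      rw [pi_setOf_filter_mem_eq, Finset.mem_powersetCard_univ.1 hs],
    Finset.sum_const, Finset.card_powersetCard, Finset.card_univ, Fintype.card_fin,
    nsmul_eq_mul, mul_assoc]

theorem measurable_card_filter_mem (hB : MeasurableSet B) :
    Measurable fun ω : Fin m → α => (Finset.univ.filter fun i => ω i ∈ B).card := by
  simp_rw [Finset.card_filter]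
  exact Finset.measurable_sum _ fun i _ =>
    Measurable.ite (measurable_pi_apply i hB) measurable_const measurable_const

theorem pi_real_setOf_le_card_filter_mem [IsProbabilityMeasure μ] (hB : MeasurableSet B) (k : ℕ) :
    (Measure.pi fun _ => μ).real
        {ω : Fin m → α | k ≤ (Finset.univ.filter fun i => ω i ∈ B).card} =
      1 - ∑ j ∈ Finset.range k, m.choose j * μ.real B ^ j * (1 - μ.real B) ^ (m - j) := by
  have hc := measurable_card_filter_mem (m := m) hB
  have hcompl : {ω : Fin m → α | k ≤ (Finset.univ.filter fun i => ω i ∈ B).card} =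
      ((fun ω => (Finset.univ.filter fun i => ω i ∈ B).card) ⁻¹' ↑(Finset.range k))ᶜ := by
    ext ω; simp
  rw [hcompl, probReal_compl_eq_one_sub (hc .of_discrete),
    ← sum_measureReal_preimage_singleton _ fun j _ => hc .of_discrete]
  congr 1
  refine Finset.sum_congr rfl fun j _ => ?_
  simp only [measureReal_def, Set.preimage, Set.mem_singleton_iff]
  rw [pi_setOf_card_filter_mem_eq μ hB, prob_compl_eq_one_sub hB]
  simp [ENNReal.toReal_sub_of_le prob_le_one ENNReal.one_ne_top]

end Binomial

theorem Real.log_mul_pow_lt_iff {a ρ : ℝ} (ha : 0 < a) (hρ : 0 < ρ) {d : ℕ} (hd : d ≠ 0)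
    (u : ℝ) : Real.log (a * ρ ^ d) < u ↔ ρ < (Real.exp u / a) ^ (d : ℝ)⁻¹ := by
  rw [Real.log_lt_iff_lt_exp (by positivity),
    Real.lt_rpow_inv_iff_of_pos hρ.le (by positivity) (by positivity), Real.rpow_natCast,
    lt_div_iff₀ ha, mul_comm]

theorem pi_real_setOf_log_kNNdist_lt {d : ℕ} (hd : d ≠ 0) (μ : Measure (Pt d)) [IsProbabilityMeasure μ]
    [NullSingletonClass μ] {k m : ℕ} (hk : 0 < k) (hkm : k ≤ m) (x : Pt d) (u : ℝ) :
    (Measure.pi fun _ : Fin m => μ).real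
        {ω | Real.log (m * kNNdist k (List.ofFn ω) x ^ d) < u} =
      1 - ∑ j ∈ Finset.range k, m.choose j *
        μ.real (Metric.ball x ((Real.exp u / m) ^ (d : ℝ)⁻¹)) ^ j *
        (1 - μ.real (Metric.ball x ((Real.exp u / m) ^ (d : ℝ)⁻¹))) ^ (m - j) := by
  classical
  have hm : (0 : ℝ) < m := by exact_mod_cast hk.trans_le hkm
  rw [← pi_real_setOf_le_card_filter_mem μ measurableSet_ball k]
  refine measureReal_congr (eventuallyEq_set.2 ?_)
  filter_upwards [ae_all_iff.2 fun i => Measure.ae_eval_ne (fun _ => μ) i x] with ω hω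
  obtain ⟨i, hi⟩ := exists_kNNdist_eq_dist hk hkm ω x
  have hpos : 0 < kNNdist k (List.ofFn ω) x := hi ▸ dist_pos.2 (hω i).symm
  rw [Real.log_mul_pow_lt_iff hm hpos hd, kNNdist_lt_iff hk hkm]
  simp only [Metric.mem_ball, dist_comm]

theorem UnifLebApprox.ae_tendsto_average {d : ℕ} {M : Set (Pt d)} {g : Pt d → ℝ}
    (hg : UnifLebApprox M g) {R : ℕ → ℝ} (hR : Tendsto R atTop (𝓝 0)) :
    ∀ᵐ x ∂volume.restrict M, Tendsto (fun n => (∫ t in Metric.closedBall x (R n) ∩ M, g t) /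
      (volume (Metric.closedBall x (R n) ∩ M)).toReal) atTop (𝓝 (g x)) := by
  choose n₀ hn₀ using fun i : ℕ => hg.2 R hR (1 / ((i : ℝ) + 1)) Nat.one_div_pos_of_nat
  have hall : ∀ᵐ x ∂volume.restrict M, ∀ i n, n₀ i < n →
      dist ((∫ t in Metric.closedBall x (R n) ∩ M, g t) /
        (volume (Metric.closedBall x (R n) ∩ M)).toReal) (g x) < 1 / ((i : ℝ) + 1) := by
    refine ae_all_iff.2 fun i => ae_all_iff.2 fun n => ?_
    by_cases hn : n₀ i < n
    · filter_upwards [hn₀ i n hn] with x hx _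
      exact abs_sub_lt_iff.2 ⟨by linarith [hx.2], by linarith [hx.1]⟩
    · exact .of_forall fun _ hn' => absurd hn' hn
  filter_upwards [hall] with x hx
  refine Metric.tendsto_atTop.2 fun ε hε => ?_
  obtain ⟨i, hi⟩ := exists_nat_one_div_lt hε
  exact ⟨n₀ i + 1, fun n hn => (hx i n (by omega)).trans hi⟩

section Ball

variable {E : Type*} [NormedAddCommGroup E] [NormedSpace ℝ E] [MeasurableSpace E] [BorelSpace E]
  [FiniteDimensional ℝ E] [Nontrivial E] (μ : Measure E) [μ.IsAddHaarMeasure]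

theorem Measure.addHaar_ball_ae_eq_closedBall (x : E) (r : ℝ) :
    Metric.ball x r =ᵐ[μ] Metric.closedBall x r := by
  refine ae_eq_set.2 ⟨?_, ?_⟩
  · rw [Set.sdiff_eq_empty.2 Metric.ball_subset_closedBall, measure_empty]
  · rw [Metric.closedBall_sdiff_ball, Measure.addHaar_sphere]

theorem withDensity_ofReal_real_ball {p : E → ℝ} (hp0 : ∀ x, 0 ≤ p x) (hp : Integrable p μ)
    (x : E) (r : ℝ) :
    (μ.withDensity fun t => ENNReal.ofReal (p t)).real (Metric.ball x r) =
      ∫ t in Metric.closedBall x r, p t ∂μ := by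
  rw [measureReal_def, withDensity_apply _ measurableSet_ball,
    ← ofReal_integral_eq_lintegral_ofReal hp.integrableOn (.of_forall hp0),
    ENNReal.toReal_ofReal (setIntegral_nonneg measurableSet_ball fun t _ => hp0 t),
    setIntegral_congr_set (Measure.addHaar_ball_ae_eq_closedBall μ x r)]

end Ball

theorem volume_real_closedBall_eq_mul_unitBallVol (d : ℕ) (x : Pt d) {r : ℝ} (hr : 0 ≤ r) :
    volume.real (Metric.closedBall x r) = r ^ d * unitBallVol d := by
  rw [Measure.addHaar_real_closedBall volume x hr, finrank_euclideanSpace_fin]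
  rfl

theorem tendsto_mul_withDensity_real_ball {d : ℕ} (hd : 0 < d) {M : Set (Pt d)}
    {p : Pt d → ℝ} (hp0 : ∀ x, 0 ≤ p x) (hp : Integrable p) (hULA : UnifLebApprox M p)
    (hint : ∀ᵐ x ∂volume.restrict M, ∃ r > 0, Metric.closedBall x r ⊆ M) (u : ℝ) :
    ∀ᵐ x ∂volume.restrict M, Tendsto (fun m : ℕ => m *
      (volume.withDensity fun t => ENNReal.ofReal (p t)).real
        (Metric.ball x ((Real.exp u / m) ^ (d : ℝ)⁻¹))) atTop
      (𝓝 (unitBallVol d * p x * Real.exp u)) := by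
  have : Nonempty (Fin d) := ⟨⟨0, hd⟩⟩
  have hr : Tendsto (fun m : ℕ => (Real.exp u / m) ^ (d : ℝ)⁻¹) atTop (𝓝 0) := by
    have := ((tendsto_const_nhds (x := Real.exp u)).div_atTop
      tendsto_natCast_atTop_atTop).rpow_const (p := (d : ℝ)⁻¹) (Or.inr (by positivity))
    rwa [Real.zero_rpow (by positivity)] at this
  filter_upwards [hULA.ae_tendsto_average hr, hint] with x hx ⟨r₀, hr₀, hball⟩
  rw [show unitBallVol d * p x * Real.exp u = p x * (unitBallVol d * Real.exp u) by ring]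
  refine (hx.mul_const _).congr' ?_
  filter_upwards [eventually_ge_atTop 1, hr.eventually (gt_mem_nhds hr₀)] with m hm hrm
  have hm' : (0 : ℝ) < m := by exact_mod_cast hm
  have hc : unitBallVol d ≠ 0 := ENNReal.toReal_ne_zero.2
    ⟨(Metric.measure_ball_pos volume 0 one_pos).ne', measure_ball_lt_top.ne⟩
  have hinter : Metric.closedBall x ((Real.exp u / m) ^ (d : ℝ)⁻¹) ∩ M =
      Metric.closedBall x ((Real.exp u / m) ^ (d : ℝ)⁻¹) :=
    Set.inter_eq_left.2 ((Metric.closedBall_subset_closedBall hrm.le).trans hball)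
  rw [hinter, withDensity_ofReal_real_ball volume hp0 hp, ← measureReal_def,
    volume_real_closedBall_eq_mul_unitBallVol d x (by positivity), Real.rpow_inv_natCast_pow (by positivity) hd.ne']
  field_simp

theorem stmt9_general {d : ℕ} (hd : 0 < d) (k : ℕ) (hk : 0 < k)
    (M : Set (Pt d)) (p : Pt d → ℝ) (hp0 : ∀ x, 0 ≤ p x) (hp1 : ∫ x, p x = 1)
    (hULA : UnifLebApprox M p)
    (hint : ∀ᵐ x ∂(volume.restrict M), ∃ r > 0, Metric.closedBall x r ⊆ M)
    (u : ℝ) :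
    ∀ᵐ x ∂(volume.restrict M),
      Tendsto (fun n : ℕ =>
          ((Measure.pi fun _ : Fin (n - 1) =>
              volume.withDensity fun t => ENNReal.ofReal (p t))
            {ω : Fin (n - 1) → Pt d |
              Real.log (((n : ℝ) - 1) * kNNdist k (List.ofFn ω) x ^ d) < u}).toReal)
        atTop
        (𝓝 (1 - Real.exp (-(unitBallVol d * p x) * Real.exp u) *
            ∑ j ∈ Finset.range k,
              (unitBallVol d * p x * Real.exp u) ^ j / (Nat.factorial j : ℝ))) := by
  have hp : Integrable p := Integrable.of_integral_ne_zero (by rw [hp1]; exact one_ne_zero)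
  have : IsProbabilityMeasure (volume.withDensity fun t => ENNReal.ofReal (p t)) :=
    ⟨by rw [withDensity_apply _ .univ, Measure.restrict_univ,
      ← ofReal_integral_eq_lintegral_ofReal hp (.of_forall hp0), hp1, ENNReal.ofReal_one]⟩
  have : Nonempty (Fin d) := ⟨⟨0, hd⟩⟩
  filter_upwards [tendsto_mul_withDensity_real_ball hd hp0 hp hULA hint u] with x hx
  have hpoisson := tendsto_const_nhds (x := (1 : ℝ)).sub <| tendsto_finsetSum (Finset.range k)
    fun j _ => ProbabilityTheory.tendsto_choose_mul_pow_of_tendsto_mul_atTop j hx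
  rw [show -(unitBallVol d * p x) * Real.exp u = -(unitBallVol d * p x * Real.exp u) by ring,
    Finset.mul_sum]
  simp_rw [← mul_div_assoc]
  refine (hpoisson.comp (tendsto_sub_atTop_nat 1)).congr' ?_
  filter_upwards [eventually_ge_atTop (k + 1)] with n hn
  rw [Function.comp_apply, ← pi_real_setOf_log_kNNdist_lt hd.ne' _ hk (by omega : k ≤ n - 1) x u,
    Nat.cast_pred (by omega), measureReal_def]

/-- Weak convergence of the conditional log-k-NN-distance CDF to the log-Erlang CDF:
if `p` is uniformly Lebesgue approximable on its support `M` (with a.e. point of `M`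
interior in the sense that small balls are contained in `M`), then for a.e. `x ∈ M`,
`F_{n,k,x}(u) → 1 - exp(-λ(x)eᵘ) Σ_{j<k} (λ(x)eᵘ)ʲ/j!` with `λ(x) = c̄ p(x)`. -/
theorem stmt9 {d : ℕ} (hd : 0 < d) (k : ℕ) (hk : 0 < k)
    (M : Set (Pt d)) (p : Pt d → ℝ) (hp0 : ∀ x, 0 ≤ p x) (hp1 : ∫ x, p x = 1)
    (hsupp : Function.support p ⊆ M) (hULA : UnifLebApprox M p)
    (hint : ∀ᵐ x ∂(volume.restrict M), ∃ r > 0, Metric.closedBall x r ⊆ M)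
    (u : ℝ) :
    ∀ᵐ x ∂(volume.restrict M),
      Tendsto (fun n : ℕ =>
          ((Measure.pi fun _ : Fin (n - 1) =>
              volume.withDensity fun t => ENNReal.ofReal (p t))
            {ω : Fin (n - 1) → Pt d |
              Real.log (((n : ℝ) - 1) * kNNdist k (List.ofFn ω) x ^ d) < u}).toReal)
        atTop
        (𝓝 (1 - Real.exp (-(unitBallVol d * p x) * Real.exp u) *
            ∑ j ∈ Finset.range k,
              (unitBallVol d * p x * Real.exp u) ^ j / (Nat.factorial j : ℝ))) :=
  stmt9_general hd k hk M p hp0 hp1 hULA hint u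
end
end

section
/- Let Y_1,…,Y_m be i.i.d. with density q supported on M′ ⊆ ℝ^d. Suppose q is bounded away from zero and uniformly Lebesgue approximable, and there exists δ₀ > 0 such that for all δ ∈ (0, δ₀), ∫_{M′} H(y,q,δ,1) q(y) dy < ∞. Let γ < k, and let k(m) be a sequence with k(m) → ∞ and m/k(m) → ∞ as m → ∞. Define the k-NN density estimator q̂_k(y) := k / ((m−1) c̄ ρ̄_k(y)^d), where ρ̄_k(y) is the k-NN distance of y among the sample and c̄ is the volume of the d-dimensional unit ball. Then for almost all y in the support of q, q̂_{k(m)}(y)^γ → q(y)^γ in probability as m → ∞. -/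
open MeasureTheory Filter Topology

noncomputable section

/-!
Let `n` be the sample size, `N_r` the number of sample points in `B(y, r)` and `r_L` the radius
of a ball of volume `k / (n L)`. Since `kNNdist ≤ r ↔ k ≤ N_r`, the estimate lies in `[L₁, L₂)`
as soon as `N_{r_{L₂}} < k ≤ N_{r_{L₁}}`. By Lebesgue's differentiation theorem the mean count
`n ν(B(y, r_L))`, with `ν` the law of the sample, is asymptotically `k q(y) / L`: below `k` for
`L = L₂ > q(y)` and above `k` for `L = L₁ < q(y)`. As `N_r` is binomial, its variance is at most
its mean, so Chebyshev bounds the probability of either failure by `O(1 / k) → 0`.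
-/

open scoped ENNReal

theorem getD_le_iff_lt_countP_of_pairwise :
    ∀ {l : List ℝ}, l.Pairwise (· ≤ ·) → ∀ {i : ℕ}, i < l.length → ∀ r : ℝ,
      (l.getD i 0 ≤ r ↔ i < l.countP (· ≤ r))
  | [], _, _, hi, _ => by simp at hi
  | a :: l, hl, i, hi, r => by
    rw [List.pairwise_cons] at hl
    by_cases har : a ≤ r
    · cases i with
      | zero => simp [har]
      | succ i =>
        have ih := getD_le_iff_lt_countP_of_pairwise hl.2 (Nat.lt_of_succ_lt_succ hi) r
        rw [List.getD_cons_succ, ih, List.countP_cons]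
        simp [har]
    · have hgt : ∀ b ∈ a :: l, r < b := by
        rintro b (_ | ⟨_, hb⟩)
        · exact not_le.mp har
        · exact (not_le.mp har).trans_le (hl.1 b hb)
      have hcount : (a :: l).countP (· ≤ r) = 0 :=
        List.countP_eq_zero.mpr fun b hb => by simpa using hgt b hb
      rw [hcount, List.getD_eq_getElem _ _ hi]
      simpa using hgt _ (List.getElem_mem hi)

theorem kNNdist_le_iff {d k : ℕ} {P : List (Pt d)} (hk : 0 < k) (hkP : k ≤ P.length)
    (z : Pt d) (r : ℝ) : kNNdist k P z ≤ r ↔ k ≤ P.countP (fun x => dist z x ≤ r) := by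
  have hsorted := List.pairwise_insertionSort (· ≤ ·) (P.map (dist z))
  have hperm := List.perm_insertionSort (· ≤ ·) (P.map (dist z))
  have hlen : k - 1 < (List.insertionSort (· ≤ ·) (P.map (dist z))).length := by
    rw [hperm.length_eq, List.length_map]; omega
  rw [kNNdist, getD_le_iff_lt_countP_of_pairwise hsorted hlen, hperm.countP_eq,
    List.countP_map]
  simp only [Function.comp_def]
  omega

theorem List.countP_ofFn_s14 {β : Type*} {n : ℕ} (ω : Fin n → β) (p : β → Bool) :
    (List.ofFn ω).countP p = ∑ j, if p (ω j) then 1 else 0 := by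
  induction n with
  | zero => simp
  | succ n ih => rw [List.ofFn_succ, List.countP_cons, Fin.sum_univ_succ, ih]; omega

def sampleCount {α : Type*} {n : ℕ} (s : Set α) (ω : Fin n → α) : ℝ :=
  ∑ j, s.indicator 1 (ω j)

theorem kNNdist_ofFn_le_iff {d k n : ℕ} (hk : 0 < k) (hkn : k ≤ n) (ω : Fin n → Pt d)
    (y : Pt d) (r : ℝ) :
    kNNdist k (List.ofFn ω) y ≤ r ↔ (k : ℝ) ≤ sampleCount (Metric.closedBall y r) ω := by
  classical
  rw [kNNdist_le_iff hk (by simpa using hkn), List.countP_ofFn_s14, sampleCount,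
    ← Nat.cast_le (α := ℝ)]
  push_cast
  simp [Set.indicator_apply, Metric.mem_closedBall, dist_comm]

section SampleCount

open ProbabilityTheory

variable {α : Type*} [MeasurableSpace α] (ν : Measure α) [IsProbabilityMeasure ν] {s : Set α}

theorem memLp_sampleCount (hs : MeasurableSet s) (n : ℕ) (p : ℝ≥0∞) :
    MemLp (sampleCount s) p (Measure.pi fun _ : Fin n => ν) := by
  have hX : MemLp (s.indicator (1 : α → ℝ)) p ν := (memLp_const 1).indicator hs
  exact memLp_finsetSum Finset.univ fun i _ =>
    hX.comp_measurePreserving (measurePreserving_eval _ i)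

theorem integral_sampleCount (hs : MeasurableSet s) (n : ℕ) :
    ∫ ω, sampleCount s ω ∂(Measure.pi fun _ : Fin n => ν) = n * ν.real s := by
  have hX : Integrable (s.indicator (1 : α → ℝ)) ν := (integrable_const 1).indicator hs
  unfold sampleCount
  rw [integral_finsetSum _ fun i _ => integrable_comp_eval hX]
  simp [integral_comp_eval (μ := fun _ : Fin n => ν) hX.aestronglyMeasurable,
    integral_indicator_one hs]

theorem variance_sampleCount_le (hs : MeasurableSet s) (n : ℕ) :
    variance (sampleCount s) (Measure.pi fun _ : Fin n => ν) ≤ n * ν.real s := by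
  have hX : MemLp (s.indicator (1 : α → ℝ)) 2 ν := (memLp_const 1).indicator hs
  have hsq : s.indicator (1 : α → ℝ) ^ 2 = s.indicator 1 := by
    ext x; by_cases hx : x ∈ s <;> simp [hx]
  have hvar : variance (s.indicator (1 : α → ℝ)) ν ≤ ν.real s := by
    refine (variance_le_expectation_sq hX.aestronglyMeasurable).trans_eq ?_
    rw [hsq, integral_indicator_one hs]
  have hsum : sampleCount s = ∑ i : Fin n, fun ω => s.indicator (1 : α → ℝ) (ω i) := by
    ext ω; simp [sampleCount]
  rw [hsum, variance_sum_pi fun _ => hX]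
  exact (Finset.sum_le_sum fun i _ => hvar).trans_eq (by simp)

theorem measure_le_abs_sampleCount_sub_le (hs : MeasurableSet s) (n : ℕ) {t : ℝ} (ht : 0 < t) :
    Measure.pi (fun _ : Fin n => ν) {ω | t ≤ |sampleCount s ω - n * ν.real s|}
      ≤ ENNReal.ofReal (n * ν.real s / t ^ 2) := by
  calc _ ≤ ENNReal.ofReal (variance (sampleCount s) (Measure.pi fun _ : Fin n => ν) / t ^ 2) := by
        rw [← integral_sampleCount ν hs n]
        exact meas_ge_le_variance_div_sq (memLp_sampleCount ν hs n 2) ht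
    _ ≤ _ := by gcongr; exact variance_sampleCount_le ν hs n

end SampleCount

theorem tendsto_measure_abs_sampleCount_sub_ge {α : Type*} [MeasurableSpace α] (ν : Measure α)
    [IsProbabilityMeasure ν] {s : ℕ → Set α} (hs : ∀ m, MeasurableSet (s m)) {n k : ℕ → ℕ}
    (hk : Tendsto k atTop atTop) {a : ℝ} (ha : a ≠ 1)
    (hratio : Tendsto (fun m => n m * ν.real (s m) / k m) atTop (𝓝 a)) :
    Tendsto (fun m => Measure.pi (fun _ : Fin (n m) => ν)
      {ω | |(k m : ℝ) - n m * ν.real (s m)| ≤ |sampleCount (s m) ω - n m * ν.real (s m)|})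
      atTop (𝓝 0) := by
  set x := fun m => n m * ν.real (s m) / k m
  have hkR : Tendsto (fun m => (k m : ℝ)) atTop atTop := tendsto_natCast_atTop_atTop.comp hk
  have hbound : Tendsto (fun m => x m / (k m * (1 - x m) ^ 2)) atTop (𝓝 0) :=
    hratio.div_atTop (hkR.atTop_mul_pos (by positivity [sub_ne_zero.mpr ha.symm])
      ((hratio.const_sub 1).pow 2))
  refine tendsto_of_tendsto_of_tendsto_of_le_of_le' tendsto_const_nhds
    (by simpa using ENNReal.tendsto_ofReal hbound) (Eventually.of_forall fun _ => zero_le) ?_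
  filter_upwards [hkR.eventually_gt_atTop 0, hratio.eventually_ne ha] with m hk0 hx1
  have hnp : n m * ν.real (s m) = k m * x m := by simp only [x]; field_simp
  have ht : 0 < |(k m : ℝ) - n m * ν.real (s m)| := by
    rw [hnp, abs_pos]; exact fun h => hx1 (by nlinarith)
  refine (measure_le_abs_sampleCount_sub_le ν (hs m) (n m) ht).trans_eq (congrArg _ ?_)
  rw [sq_abs, hnp]
  field_simp

theorem measureReal_withDensity_ofReal {α : Type*} [MeasurableSpace α] {μ : Measure α}
    {f : α → ℝ} (hf : Integrable f μ) (hf0 : ∀ x, 0 ≤ f x) {s : Set α} (hs : MeasurableSet s) :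
    (μ.withDensity fun x => ENNReal.ofReal (f x)).real s = ∫ x in s, f x ∂μ := by
  rw [measureReal_def, withDensity_apply _ hs, ← ofReal_integral_eq_lintegral_ofReal
    hf.integrableOn (Eventually.of_forall hf0), ENNReal.toReal_ofReal
    (setIntegral_nonneg hs fun x _ => hf0 x)]

theorem unitBallVol_pos (d : ℕ) : 0 < unitBallVol d :=
  ENNReal.toReal_pos (Metric.measure_ball_pos volume _ one_pos).ne' measure_ball_lt_top.ne

theorem volume_real_closedBall {d : ℕ} (y : Pt d) {r : ℝ} (hr : 0 ≤ r) :
    volume.real (Metric.closedBall y r) = unitBallVol d * r ^ d := by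
  rw [measureReal_def, Measure.addHaar_closedBall volume y hr, ENNReal.toReal_mul,
    ENNReal.toReal_ofReal (by positivity), finrank_euclideanSpace_fin, unitBallVol, mul_comm]

theorem ae_tendsto_measureReal_closedBall_div {d : ℕ} {q : Pt d → ℝ} (hq : Integrable q)
    (hq0 : ∀ x, 0 ≤ q x) :
    ∀ᵐ y, Tendsto (fun r => (volume.withDensity fun t => ENNReal.ofReal (q t)).real
      (Metric.closedBall y r) / (unitBallVol d * r ^ d)) (𝓝[>] 0) (𝓝 (q y)) := by
  filter_upwards [IsUnifLocDoublingMeasure.ae_tendsto_average volume hq.locallyIntegrable 1]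
    with y hy
  have hball : ∀ᶠ r in 𝓝[>] (0 : ℝ), y ∈ Metric.closedBall y (1 * r) := by
    filter_upwards [self_mem_nhdsWithin] with r hr
    simpa using le_of_lt hr
  refine (hy (fun _ => y) id tendsto_id hball).congr' ?_
  filter_upwards [self_mem_nhdsWithin] with r (hr : 0 < r)
  rw [id, setAverage_eq, smul_eq_mul, volume_real_closedBall y hr.le,
    measureReal_withDensity_ofReal hq hq0 measurableSet_closedBall, inv_mul_eq_div]

def radiusOfVolume (d : ℕ) (t : ℝ) : ℝ := (t / unitBallVol d) ^ (d : ℝ)⁻¹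

theorem radiusOfVolume_nonneg (d : ℕ) {t : ℝ} (ht : 0 ≤ t) : 0 ≤ radiusOfVolume d t :=
  Real.rpow_nonneg (div_nonneg ht (unitBallVol_pos d).le) _

theorem unitBallVol_mul_radiusOfVolume_pow {d : ℕ} (hd : d ≠ 0) {t : ℝ} (ht : 0 ≤ t) :
    unitBallVol d * radiusOfVolume d t ^ d = t := by
  rw [radiusOfVolume, Real.rpow_inv_natCast_pow (div_nonneg ht (unitBallVol_pos d).le) hd,
    mul_div_cancel₀ _ (unitBallVol_pos d).ne']

theorem radiusOfVolume_lt_iff {d : ℕ} (hd : d ≠ 0) {t ρ : ℝ} (ht : 0 ≤ t) (hρ : 0 ≤ ρ) :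
    radiusOfVolume d t < ρ ↔ t < unitBallVol d * ρ ^ d := by
  conv_rhs => rw [← unitBallVol_mul_radiusOfVolume_pow hd ht]
  rw [mul_lt_mul_iff_right₀ (unitBallVol_pos d),
    pow_lt_pow_iff_left₀ (radiusOfVolume_nonneg d ht) hρ hd]

theorem tendsto_radiusOfVolume {d : ℕ} (hd : d ≠ 0) :
    Tendsto (radiusOfVolume d) (𝓝[>] 0) (𝓝[>] 0) := by
  have hcont : Continuous (radiusOfVolume d) :=
    (continuous_id.div_const _).rpow_const fun _ => Or.inr (by positivity)
  refine tendsto_nhdsWithin_iff.mpr ⟨?_, ?_⟩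
  · have h0 : radiusOfVolume d 0 = 0 := by
      simp [radiusOfVolume, Real.zero_rpow (inv_ne_zero (Nat.cast_ne_zero.mpr hd))]
    simpa [ContinuousWithinAt, h0] using hcont.continuousWithinAt (s := Set.Ioi 0) (x := 0)
  · filter_upwards [self_mem_nhdsWithin] with t (ht : 0 < t)
    exact Real.rpow_pos_of_pos (div_pos ht (unitBallVol_pos d)) _

def knnDensity {d n : ℕ} (k : ℕ) (ω : Fin n → Pt d) (y : Pt d) : ℝ :=
  k / (n * unitBallVol d * kNNdist k (List.ofFn ω) y ^ d)

theorem knnDensity_mem_Ico {d n k : ℕ} (hd : d ≠ 0) (hk : 0 < k) (hkn : k ≤ n) {L₁ L₂ : ℝ}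
    (hL₁ : 0 < L₁) (hL₂ : 0 < L₂) {ω : Fin n → Pt d} {y : Pt d}
    (h₂ : sampleCount (Metric.closedBall y (radiusOfVolume d (k / (n * L₂)))) ω < k)
    (h₁ : k ≤ sampleCount (Metric.closedBall y (radiusOfVolume d (k / (n * L₁)))) ω) :
    knnDensity k ω y ∈ Set.Ico L₁ L₂ := by
  have hkR : (0 : ℝ) < k := Nat.cast_pos.mpr hk
  have hnR : (0 : ℝ) < n := Nat.cast_pos.mpr (hk.trans_le hkn)
  set ρ := kNNdist k (List.ofFn ω) y
  have hρ₂ : radiusOfVolume d (k / (n * L₂)) < ρ :=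
    not_le.mp fun h => h₂.not_ge ((kNNdist_ofFn_le_iff hk hkn ω y _).mp h)
  have hρ₁ : ρ ≤ radiusOfVolume d (k / (n * L₁)) := (kNNdist_ofFn_le_iff hk hkn ω y _).mpr h₁
  have hρ : 0 ≤ ρ := (radiusOfVolume_nonneg d (by positivity)).trans hρ₂.le
  have hV₂ := (radiusOfVolume_lt_iff hd (by positivity) hρ).mp hρ₂
  have hV₁ : unitBallVol d * ρ ^ d ≤ k / (n * L₁) :=
    not_lt.mp fun h => hρ₁.not_gt ((radiusOfVolume_lt_iff hd (by positivity) hρ).mpr h)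
  have hV : 0 < unitBallVol d * ρ ^ d := (by positivity : (0 : ℝ) < k / (n * L₂)).trans hV₂
  rw [div_lt_iff₀ (by positivity)] at hV₂
  rw [le_div_iff₀ (by positivity)] at hV₁
  rw [knnDensity, mul_assoc, Set.mem_Ico, le_div_iff₀ (by positivity), div_lt_iff₀ (by positivity)]
  constructor <;> linarith

theorem tendsto_measureReal_closedBall_radiusOfVolume_div {d : ℕ} (hd : d ≠ 0)
    {ν : Measure (Pt d)} {y : Pt d} {Q : ℝ}
    (hν : Tendsto (fun r => ν.real (Metric.closedBall y r) / (unitBallVol d * r ^ d))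
      (𝓝[>] 0) (𝓝 Q)) :
    Tendsto (fun t => ν.real (Metric.closedBall y (radiusOfVolume d t)) / t) (𝓝[>] 0) (𝓝 Q) := by
  refine (hν.comp (tendsto_radiusOfVolume hd)).congr' ?_
  filter_upwards [self_mem_nhdsWithin] with t (ht : 0 < t)
  rw [Function.comp_apply, unitBallVol_mul_radiusOfVolume_pow hd ht.le]

theorem exists_pos_Ico_subset_of_mem_nhds {Q : ℝ} (hQ : 0 < Q) {U : Set ℝ} (hU : U ∈ 𝓝 Q) :
    ∃ L₁ L₂, 0 < L₁ ∧ L₁ < Q ∧ Q < L₂ ∧ Set.Ico L₁ L₂ ⊆ U := by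
  obtain ⟨l, u, ⟨hlQ, hQu⟩, hlu⟩ := mem_nhds_iff_exists_Ioo_subset.mp hU
  refine ⟨(max l 0 + Q) / 2, u, by positivity, by linarith [max_lt hlQ hQ], hQu,
    fun x hx => hlu ⟨?_, hx.2⟩⟩
  linarith [hx.1, le_max_left l 0]

theorem eventually_pos_and_le_of_tendsto_div_atTop {n k : ℕ → ℕ}
    (hnk : Tendsto (fun m => (n m : ℝ) / k m) atTop atTop) :
    ∀ᶠ m in atTop, 0 < k m ∧ k m ≤ n m := by
  filter_upwards [hnk.eventually_ge_atTop 1] with m h1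
  have hk0 : 0 < k m := Nat.pos_of_ne_zero fun h => by norm_num [h] at h1
  rw [le_div_iff₀ (by positivity), one_mul, Nat.cast_le] at h1
  exact ⟨hk0, h1⟩

theorem tendsto_mul_measureReal_closedBall_radiusOfVolume_div {d : ℕ} (hd : d ≠ 0)
    {ν : Measure (Pt d)} {y : Pt d} {Q : ℝ}
    (hν : Tendsto (fun r => ν.real (Metric.closedBall y r) / (unitBallVol d * r ^ d))
      (𝓝[>] 0) (𝓝 Q))
    {n k : ℕ → ℕ} (hnk : Tendsto (fun m => (n m : ℝ) / k m) atTop atTop) {L : ℝ} (hL : 0 < L) :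
    Tendsto (fun m => n m * ν.real (Metric.closedBall y (radiusOfVolume d (k m / (n m * L))))
      / k m) atTop (𝓝 (Q / L)) := by
  have hpos := eventually_pos_and_le_of_tendsto_div_atTop hnk
  have ht : Tendsto (fun m => (k m : ℝ) / (n m * L)) atTop (𝓝[>] 0) := by
    refine tendsto_nhdsWithin_iff.mpr ⟨?_, ?_⟩
    · have hkn : Tendsto (fun m => (k m : ℝ) / n m) atTop (𝓝 0) :=
        hnk.inv_tendsto_atTop.congr fun m => by simp [inv_div]
      simpa only [div_mul_eq_div_div, zero_div] using hkn.div_const L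
    · filter_upwards [hpos] with m ⟨hk0, hkn⟩
      have : 0 < n m := hk0.trans_le hkn
      exact Set.mem_Ioi.mpr (by positivity)
  refine (((tendsto_measureReal_closedBall_radiusOfVolume_div hd hν).comp ht).div_const
    L).congr' ?_
  filter_upwards [hpos] with m ⟨hk0, hkn⟩
  have : 0 < n m := hk0.trans_le hkn
  simp only [Function.comp_apply]
  field_simp

theorem tendsto_measure_knnDensity_notMem {d : ℕ} (hd : d ≠ 0) (ν : Measure (Pt d))
    [IsProbabilityMeasure ν] {y : Pt d} {Q : ℝ} (hQ : 0 < Q)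
    (hν : Tendsto (fun r => ν.real (Metric.closedBall y r) / (unitBallVol d * r ^ d))
      (𝓝[>] 0) (𝓝 Q))
    {n k : ℕ → ℕ} (hk : Tendsto k atTop atTop)
    (hnk : Tendsto (fun m => (n m : ℝ) / k m) atTop atTop) {U : Set ℝ} (hU : U ∈ 𝓝 Q) :
    Tendsto (fun m => Measure.pi (fun _ : Fin (n m) => ν) {ω | knnDensity (k m) ω y ∉ U})
      atTop (𝓝 0) := by
  obtain ⟨L₁, L₂, hL₁, hL₁Q, hQL₂, hIco⟩ := exists_pos_Ico_subset_of_mem_nhds hQ hU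
  have hL₂ : 0 < L₂ := hQ.trans hQL₂
  have h₂ : Q / L₂ < 1 := (div_lt_one hL₂).mpr hQL₂
  have h₁ : 1 < Q / L₁ := (one_lt_div hL₁).mpr hL₁Q
  have hratio L (hL : 0 < L) :=
    tendsto_mul_measureReal_closedBall_radiusOfVolume_div hd hν hnk hL
  have htail L (hL : 0 < L) (hQL : Q / L ≠ 1) :=
    tendsto_measure_abs_sampleCount_sub_ge ν (fun _ => measurableSet_closedBall) hk hQL
      (hratio L hL)
  refine tendsto_of_tendsto_of_tendsto_of_le_of_le' tendsto_const_nhds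
    (by simpa using (htail L₂ hL₂ h₂.ne).add (htail L₁ hL₁ h₁.ne'))
    (Eventually.of_forall fun _ => zero_le) ?_
  filter_upwards [eventually_pos_and_le_of_tendsto_div_atTop hnk,
    (hratio L₂ hL₂).eventually_lt_const h₂, (hratio L₁ hL₁).eventually_const_lt h₁]
    with m ⟨hk0, hkn⟩ he₂ he₁
  refine (measure_mono fun ω hω => ?_).trans (measure_union_le _ _)
  have hkR : (0 : ℝ) < k m := Nat.cast_pos.mpr hk0
  rw [div_lt_one hkR] at he₂
  rw [one_lt_div hkR] at he₁
  by_contra hgood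
  simp only [Set.mem_union, Set.mem_ofPred_eq, not_or, not_le] at hgood
  rw [abs_of_pos (sub_pos.mpr he₂), abs_of_neg (sub_neg.mpr he₁)] at hgood
  refine hω (hIco (knnDensity_mem_Ico hd hk0 hkn hL₁ hL₂ ?_ ?_))
  · linarith [(abs_lt.mp hgood.1).2]
  · linarith [(abs_lt.mp hgood.2).1]

theorem stmt14_general {d : ℕ} (hd : 0 < d) (γ : ℝ)
    (M' : Set (Pt d)) (q : Pt d → ℝ)
    (hq0 : ∀ x, 0 ≤ q x) (hq1 : ∫ x, q x = 1)
    (haway : ∃ c > 0, ∀ x ∈ M', c ≤ q x) :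
    ∀ (kseq : ℕ → ℕ), Tendsto kseq atTop atTop →
      Tendsto (fun m : ℕ => (m : ℝ) / kseq m) atTop atTop →
    ∀ᵐ y ∂(volume.restrict M'), ∀ ε > 0,
      Tendsto (fun m : ℕ =>
          (Measure.pi fun _ : Fin (m - 1) =>
              volume.withDensity fun t => ENNReal.ofReal (q t))
            {ω : Fin (m - 1) → Pt d |
              ε < |((kseq m : ℝ) / (((m : ℝ) - 1) * unitBallVol d *
                    kNNdist (kseq m) (List.ofFn ω) y ^ d)) ^ γ - q y ^ γ|})
        atTop (𝓝 0) := by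
  intro kseq hk hmk
  obtain ⟨c, hc, hcq⟩ := haway
  have hq : Integrable q := .of_integral_ne_zero (by simp [hq1])
  set ν := volume.withDensity fun t => ENNReal.ofReal (q t)
  have : IsProbabilityMeasure ν := ⟨by
    rw [withDensity_apply _ MeasurableSet.univ, Measure.restrict_univ,
      ← ofReal_integral_eq_lintegral_ofReal hq (Eventually.of_forall hq0), hq1, ENNReal.ofReal_one]⟩
  have hnk : Tendsto (fun m => ((m - 1 : ℕ) : ℝ) / kseq m) atTop atTop := by
    refine (hmk.atTop_add ((tendsto_const_nhds (x := (-1 : ℝ))).div_atTop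
      (tendsto_natCast_atTop_atTop.comp hk))).congr' ?_
    filter_upwards [eventually_ge_atTop 1] with m hm
    simp only [Function.comp_apply, Nat.cast_sub hm, Nat.cast_one]
    ring
  -- `M'` need not be measurable, but the superset `{c ≤ q}` is null-measurable.
  have hcM' : ∀ᵐ y ∂volume.restrict M', c ≤ q y :=
    ae_mono (Measure.restrict_mono_set volume hcq)
      (ae_restrict_mem₀ (nullMeasurableSet_le aemeasurable_const hq.aemeasurable))
  filter_upwards [hcM', ae_restrict_of_ae (ae_tendsto_measureReal_closedBall_div hq hq0)]
    with y hcy hy ε hε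
  have hQ : 0 < q y := hc.trans_le hcy
  have hU : {u : ℝ | |u ^ γ - q y ^ γ| ≤ ε} ∈ 𝓝 (q y) :=
    (Real.continuousAt_rpow_const _ γ (Or.inl hQ.ne')).preimage_mem_nhds
      (Metric.closedBall_mem_nhds _ hε)
  refine (tendsto_measure_knnDensity_notMem hd.ne' ν hQ hy hk hnk hU).congr' ?_
  filter_upwards [eventually_ge_atTop 1] with m hm
  simp only [knnDensity, not_le, Nat.cast_sub hm, Nat.cast_one]

/-- Convergence in probability of the powered k-NN density estimator for the
`Y`-sample: under the regularity/H-boundedness assumptions on `q`, if `γ < k`,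
`k(m) → ∞` and `m/k(m) → ∞`, then for a.e. `y` in the support `M'` of `q` and every
`ε > 0`, `P(|q̂_{k(m)}(y)^γ - q(y)^γ| > ε) → 0`, where
`q̂_k(y) = k/((m-1) c̄ ρ̄_k(y)^d)` with `ρ̄_k(y)` the k-NN distance of `y` among
the (other `m-1` points of the) sample. -/
theorem stmt14 {d : ℕ} (hd : 0 < d) (k : ℕ) (hk : 0 < k) (γ : ℝ) (hγk : γ < k)
    (M' : Set (Pt d)) (q : Pt d → ℝ)
    (hq0 : ∀ x, 0 ≤ q x) (hq1 : ∫ x, q x = 1) (hsupp : Function.support q ⊆ M')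
    (haway : ∃ c > 0, ∀ x ∈ M', c ≤ q x)
    (hULA : UnifLebApprox M' q)
    (hH : ∃ δ₀ > 0, ∀ δ ∈ Set.Ioo (0 : ℝ) δ₀,
      IntegrableOn (fun y => Hfun k γ γ q y δ 1 * q y) M') :
    ∀ (kseq : ℕ → ℕ), Tendsto kseq atTop atTop →
      Tendsto (fun m : ℕ => (m : ℝ) / kseq m) atTop atTop →
    ∀ᵐ y ∂(volume.restrict M'), ∀ ε > 0,
      Tendsto (fun m : ℕ =>
          (Measure.pi fun _ : Fin (m - 1) =>
              volume.withDensity fun t => ENNReal.ofReal (q t))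
            {ω : Fin (m - 1) → Pt d |
              ε < |((kseq m : ℝ) / (((m : ℝ) - 1) * unitBallVol d *
                    kNNdist (kseq m) (List.ofFn ω) y ^ d)) ^ γ - q y ^ γ|})
        atTop (𝓝 0) :=
  stmt14_general hd γ M' q hq0 hq1 haway
end
end
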